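/- For a finite graph G = (V,E), the polytope {x ∈ [0,1]^E : Σ_{e∈E(U)} x_e ≤ |U| for all U ⊆ V} equals the convex hull of the indicator vectors of single-cycle forests of G. -/

import Mathlib

/-!
For an edge set `S` on the finite vertex set `V`, the quantity `#S + #(components of (V, S))`
is monotone in `S`, because a new edge merges at most two components. If a component `C` of a
single-cycle forest has edge set `T` with `#T ≤ #C`, comparing `T` with any `S ⊆ T` whose
edges lie inside `W` gives `#S ≤ #W`; summing over components, the single-cycle forests are
exactly the edge sets with `#F'(U) ≤ #U` for all `U`, i.e. the integer points of the polytope.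

By Krein–Milman it remains to show that extreme points are integral. Tight sets are closed
under intersection, and a tight set containing exactly one fractional edge would force that
edge to be integral. So a smallest tight set containing a fractional edge `e₀` contains a second
one `e₁`, and every tight set contains both or neither. Moving along `±(𝟙_{e₀} - 𝟙_{e₁})`
(or along `±𝟙_{e₀}` if no tight set contains a fractional edge) stays in the polytope.
-/

open scoped Classical

/-- A graph is a single-cycle forest if every connected component contains at most one cycle. -/
def IsSingleCycleForest {W : Type*} (G : SimpleGraph W) : Prop :=
  ∀ c : G.ConnectedComponent,
    {e ∈ G.edgeSet | ∀ v ∈ e, G.connectedComponentMk v = c}.ncard ≤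
      {v : W | G.connectedComponentMk v = c}.ncard

/-- The graph on `V` whose edges are the two-element sets belonging to `F'`. -/
def pairGraph {V : Type*} [DecidableEq V] (F' : Finset (Finset V)) : SimpleGraph V where
  Adj u v := u ≠ v ∧ ({u, v} : Finset V) ∈ F'
  symm := by
    constructor
    intro u v h
    exact ⟨h.1.symm, by rw [Finset.pair_comm]; exact h.2⟩
  loopless := by
    constructor
    intro u h
    exact h.1 rfl

open Finset

namespace SimpleGraph

variable {V : Type*} {G : SimpleGraph V}

lemma connectedComponentMk_eq_or_mem_pair_of_reachable_sup_edge {a b u v : V}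
    (h : (G ⊔ edge a b).Reachable u v) :
    G.connectedComponentMk u = G.connectedComponentMk v ∨
      G.connectedComponentMk u ∈ ({G.connectedComponentMk a, G.connectedComponentMk b} : Set _) ∧
        G.connectedComponentMk v ∈
          ({G.connectedComponentMk a, G.connectedComponentMk b} : Set _) := by
  obtain ⟨p⟩ := h
  set P : Set G.ConnectedComponent := {G.connectedComponentMk a, G.connectedComponentMk b}
  induction p with
  | nil => exact Or.inl rfl
  | @cons x y z hxy p ih =>
    rcases hxy with hxy | hxy
    · rwa [ConnectedComponent.connectedComponentMk_eq_of_adj hxy]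
    · have hxy' : G.connectedComponentMk x ∈ P ∧ G.connectedComponentMk y ∈ P := by
        rcases (edge_adj a b x y).1 hxy with ⟨⟨rfl, rfl⟩ | ⟨rfl, rfl⟩, -⟩ <;> simp [P]
      refine Or.inr ⟨hxy'.1, ?_⟩
      rcases ih with h | h
      · exact h ▸ hxy'.2
      · exact h.2

lemma card_connectedComponent_le_sup_edge_add_one [Finite V] (a b : V) :
    Nat.card G.ConnectedComponent ≤ Nat.card (G ⊔ edge a b).ConnectedComponent + 1 := by
  set A := G.connectedComponentMk a
  set ψ := ConnectedComponent.map (Hom.ofLE (le_sup_left : G ≤ G ⊔ edge a b))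
  have hψ : ∀ x y, ψ x = ψ y → x = y ∨ x ∈ ({A, G.connectedComponentMk b} : Set _) ∧
      y ∈ ({A, G.connectedComponentMk b} : Set _) := by
    refine ConnectedComponent.ind₂ fun u v huv => ?_
    exact connectedComponentMk_eq_or_mem_pair_of_reachable_sup_edge (ConnectedComponent.exact huv)
  let f : G.ConnectedComponent → Option (G ⊔ edge a b).ConnectedComponent :=
    fun x => if x = A then none else some (ψ x)
  have hf : Function.Injective f := by
    intro x y hxy
    by_cases hx : x = A <;> by_cases hy : y = A <;>
      simp only [f, hx, hy, if_true, if_false, reduceCtorEq, Option.some.injEq] at hxy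
    · exact hx.trans hy.symm
    · rcases hψ x y hxy with h | ⟨hx', hy'⟩
      · exact h
      · simp only [Set.mem_insert_iff, Set.mem_singleton_iff, hx, hy, false_or] at hx' hy'
        exact hx'.trans hy'.symm
  simpa using Nat.card_le_card_of_injective f hf

lemma card_compl_add_one_le_card_connectedComponent [Fintype V] [DecidableEq V] {W : Finset V}
    {w : V} (hw : w ∈ W) (hW : ∀ v ∉ W, ∀ u, ¬ G.Adj v u) :
    #Wᶜ + 1 ≤ Nat.card G.ConnectedComponent := by
  have hiso : ∀ v ∉ W, ∀ u, G.Reachable v u → v = u := by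
    rintro v hv u ⟨p⟩
    cases p with
    | nil => rfl
    | cons h _ => exact absurd h (hW v hv _)
  have hinj : Set.InjOn G.connectedComponentMk ↑(insert w Wᶜ) := by
    intro u hu v hv huv
    have hr := ConnectedComponent.exact huv
    simp only [coe_insert, coe_compl, Set.mem_insert_iff, Set.mem_compl_iff, mem_coe] at hu hv
    rcases hu with rfl | hu
    · rcases hv with rfl | hv
      · rfl
      · exact (hiso v hv u hr.symm).symm
    · exact hiso u hu v hr
  have hw' : w ∉ Wᶜ := by simpa using hw
  calc #Wᶜ + 1 = #(insert w Wᶜ) := (card_insert_of_notMem hw').symm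
    _ ≤ #(univ : Finset G.ConnectedComponent) :=
      card_le_card_of_injOn _ (fun _ _ => mem_univ _) hinj
    _ = Nat.card G.ConnectedComponent := by rw [card_univ, Nat.card_eq_fintype_card]

lemma card_connectedComponent_le_card_compl_add_one [Fintype V] [DecidableEq V] {C : Finset V}
    (hC : ∀ u ∈ C, ∀ v ∈ C, G.Reachable u v) :
    Nat.card G.ConnectedComponent ≤ #Cᶜ + 1 := by
  have hcover : (univ : Finset G.ConnectedComponent) ⊆
      Cᶜ.image G.connectedComponentMk ∪ C.image G.connectedComponentMk := by
    intro c _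
    obtain ⟨v, rfl⟩ := c.exists_rep
    by_cases hv : v ∈ C
    · exact mem_union_right _ (mem_image_of_mem _ hv)
    · exact mem_union_left _ (mem_image_of_mem _ (mem_compl.2 hv))
  have hC1 : #(C.image G.connectedComponentMk) ≤ 1 := by
    refine card_le_one.2 fun _ hx _ hy => ?_
    obtain ⟨u, hu, rfl⟩ := mem_image.1 hx
    obtain ⟨v, hv, rfl⟩ := mem_image.1 hy
    exact ConnectedComponent.sound (hC u hu v hv)
  calc Nat.card G.ConnectedComponent = #(univ : Finset G.ConnectedComponent) := by
        rw [card_univ, Nat.card_eq_fintype_card]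
    _ ≤ #(Cᶜ.image G.connectedComponentMk) + #(C.image G.connectedComponentMk) :=
      (card_le_card hcover).trans (card_union_le _ _)
    _ ≤ #Cᶜ + 1 := add_le_add card_image_le hC1

end SimpleGraph

section PairGraph

variable {V : Type*} [DecidableEq V]

@[simp] lemma pairGraph_adj {S : Finset (Finset V)} {u v : V} :
    (pairGraph S).Adj u v ↔ u ≠ v ∧ {u, v} ∈ S := Iff.rfl

lemma pairGraph_insert_pair (S : Finset (Finset V)) (a b : V) :
    pairGraph (insert {a, b} S) = pairGraph S ⊔ SimpleGraph.edge a b := by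
  ext u v
  simp only [pairGraph_adj, mem_insert, SimpleGraph.sup_adj, SimpleGraph.edge_adj, ← coe_inj,
    coe_pair, Set.pair_eq_pair_iff]
  tauto

lemma ncard_edgeSet_pairGraph_filter {F' : Finset (Finset V)} (hF : ∀ e ∈ F', #e = 2)
    (p : V → Prop) :
    {e ∈ (pairGraph F').edgeSet | ∀ v ∈ e, p v}.ncard =
      #(F'.filter fun e => ∀ v ∈ e, p v) := by
  have hinj : Function.Injective (Sym2.toFinset : Sym2 V → Finset V) := fun z w h =>
    Sym2.ext fun x => by rw [← Sym2.mem_toFinset, h, Sym2.mem_toFinset]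
  rw [← Set.ncard_image_of_injective _ hinj, ← Set.ncard_coe_finset]
  congr 1
  ext f
  simp only [Set.mem_image, Set.mem_ofPred_eq, coe_filter]
  constructor
  · rintro ⟨z, ⟨hz, hp⟩, rfl⟩
    induction z using Sym2.ind with
    | h u v =>
      rw [Sym2.toFinset_mk_eq]
      exact ⟨hz.2, by simpa [Sym2.mem_iff] using hp⟩
  · rintro ⟨hf, hp⟩
    obtain ⟨a, b, hab, rfl⟩ := card_eq_two.1 (hF f hf)
    exact ⟨s(a, b), ⟨⟨hab, hf⟩, by simpa [Sym2.mem_iff] using hp⟩, Sym2.toFinset_mk_eq⟩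

variable [Fintype V]

lemma card_add_card_connectedComponent_le_insert (S : Finset (Finset V)) {e : Finset V}
    (he : #e = 2) :
    #S + Nat.card (pairGraph S).ConnectedComponent ≤
      #(insert e S) + Nat.card (pairGraph (insert e S)).ConnectedComponent := by
  by_cases heS : e ∈ S
  · rw [insert_eq_of_mem heS]
  obtain ⟨a, b, -, rfl⟩ := card_eq_two.1 he
  rw [card_insert_of_notMem heS, pairGraph_insert_pair]
  have := (pairGraph S).card_connectedComponent_le_sup_edge_add_one a b
  omega

lemma card_add_card_connectedComponent_mono {S T : Finset (Finset V)} (hT : ∀ e ∈ T, #e = 2)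
    (hST : S ⊆ T) :
    #S + Nat.card (pairGraph S).ConnectedComponent ≤
      #T + Nat.card (pairGraph T).ConnectedComponent := by
  suffices h : ∀ D ⊆ T, #S + Nat.card (pairGraph S).ConnectedComponent ≤
      #(S ∪ D) + Nat.card (pairGraph (S ∪ D)).ConnectedComponent by
    simpa [union_sdiff_of_subset hST] using h (T \ S) sdiff_subset
  intro D hD
  induction D using Finset.induction_on with
  | empty => simp
  | insert e D _ ih =>
    rw [union_insert]
    exact (ih ((subset_insert _ _).trans hD)).trans
      (card_add_card_connectedComponent_le_insert _ (hT e (hD (mem_insert_self _ _))))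

lemma card_le_card_of_subset_of_forall_reachable {S T : Finset (Finset V)} {C W : Finset V}
    (hT : ∀ e ∈ T, #e = 2) (hTC : #T ≤ #C)
    (hC : ∀ u ∈ C, ∀ v ∈ C, (pairGraph T).Reachable u v) (hST : S ⊆ T)
    (hSW : ∀ e ∈ S, e ⊆ W) : #S ≤ #W := by
  rcases S.eq_empty_or_nonempty with rfl | ⟨e, he⟩
  · simp
  obtain ⟨a, b, -, rfl⟩ := card_eq_two.1 (hT _ (hST he))
  have hiso : ∀ v ∉ W, ∀ u, ¬ (pairGraph S).Adj v u := fun v hv u h =>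
    hv (hSW _ h.2 (mem_insert_self _ _))
  have hlower := SimpleGraph.card_compl_add_one_le_card_connectedComponent
    (hSW _ he (mem_insert_self a {b})) hiso
  have hupper := SimpleGraph.card_connectedComponent_le_card_compl_add_one hC
  have hmono := card_add_card_connectedComponent_mono hT hST
  have := card_add_card_compl C
  have := card_add_card_compl W
  omega

end PairGraph

section SingleCycleForest

variable {V : Type*} [DecidableEq V] [Fintype V]

lemma reachable_pairGraph_filter_subset_supp {F' : Finset (Finset V)}
    (c : (pairGraph F').ConnectedComponent) {u v : V} (hu : u ∈ c.supp) (hv : v ∈ c.supp) :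
    (pairGraph (F'.filter (· ⊆ c.supp.toFinset))).Reachable u v := by
  let φ : c.toSimpleGraph →g pairGraph (F'.filter (· ⊆ c.supp.toFinset)) :=
    { toFun := Subtype.val
      map_rel' := fun {x y} (hxy : (pairGraph F').Adj x y) => ⟨hxy.ne, mem_filter.2 ⟨hxy.2,
        insert_subset_iff.2 ⟨Set.mem_toFinset.2 x.2,
          singleton_subset_iff.2 (Set.mem_toFinset.2 y.2)⟩⟩⟩ }
  exact (c.connected_toSimpleGraph.preconnected ⟨u, hu⟩ ⟨v, hv⟩).map φ

lemma isSingleCycleForest_pairGraph_iff_forall_component {F' : Finset (Finset V)}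
    (hF : ∀ e ∈ F', #e = 2) :
    IsSingleCycleForest (pairGraph F') ↔
      ∀ c : (pairGraph F').ConnectedComponent,
        #(F'.filter (· ⊆ c.supp.toFinset)) ≤ #c.supp.toFinset := by
  refine forall_congr' fun c => ?_
  rw [ncard_edgeSet_pairGraph_filter hF, ← Set.ncard_eq_toFinset_card']
  congr! 3 with e
  simp [subset_iff]

theorem isSingleCycleForest_pairGraph_iff {F' : Finset (Finset V)} (hF : ∀ e ∈ F', #e = 2) :
    IsSingleCycleForest (pairGraph F') ↔ ∀ U : Finset V, #(F'.filter (· ⊆ U)) ≤ #U := by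
  rw [isSingleCycleForest_pairGraph_iff_forall_component hF]
  refine ⟨fun h U => ?_, fun h c => h _⟩
  set κ := (pairGraph F').connectedComponentMk
  have hcomp (c : (pairGraph F').ConnectedComponent) :
      #((F'.filter (· ⊆ c.supp.toFinset)).filter (· ⊆ U)) ≤ #(U.filter (κ · = c)) := by
    refine card_le_card_of_subset_of_forall_reachable (fun e he => hF e (mem_filter.1 he).1)
      (h c) (fun u hu v hv => reachable_pairGraph_filter_subset_supp c (by simpa using hu)
        (by simpa using hv)) (filter_subset _ _) fun e he v hv => ?_
    obtain ⟨⟨-, hec⟩, heU⟩ := mem_filter.1 he |>.imp_left mem_filter.1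
    exact mem_filter.2 ⟨heU hv, by simpa using hec hv⟩
  have hcover : F'.filter (· ⊆ U) ⊆ univ.biUnion fun c : (pairGraph F').ConnectedComponent =>
      (F'.filter (· ⊆ c.supp.toFinset)).filter (· ⊆ U) := by
    intro e he
    obtain ⟨heF, heU⟩ := mem_filter.1 he
    obtain ⟨a, b, hab, rfl⟩ := card_eq_two.1 (hF _ heF)
    have hab' : (pairGraph F').Reachable a b := SimpleGraph.Adj.reachable ⟨hab, heF⟩
    refine mem_biUnion.2 ⟨κ a, mem_univ _, mem_filter.2 ⟨mem_filter.2 ⟨heF, ?_⟩, heU⟩⟩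
    simp [subset_iff, κ, hab'.symm]
  calc #(F'.filter (· ⊆ U))
      ≤ ∑ c : (pairGraph F').ConnectedComponent,
          #((F'.filter (· ⊆ c.supp.toFinset)).filter (· ⊆ U)) :=
        (card_le_card hcover).trans card_biUnion_le
    _ ≤ ∑ c, #(U.filter (κ · = c)) := sum_le_sum fun c _ => hcomp c
    _ = #U := (card_eq_sum_card_fiberwise fun _ _ => mem_univ _).symm

end SingleCycleForest

section Polytope

open Filter Topology

variable {V : Type*} [DecidableEq V]

def singleCycleForestPolytope (E : Finset (Finset V)) : Set (Finset V → ℝ) :=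
  {x | (∀ e ∈ E, 0 ≤ x e ∧ x e ≤ 1) ∧ (∀ e ∉ E, x e = 0) ∧
    ∀ U : Finset V, ∑ e ∈ E.filter (· ⊆ U), x e ≤ #U}

def IsTight (E : Finset (Finset V)) (x : Finset V → ℝ) (U : Finset V) : Prop :=
  ∑ e ∈ E.filter (· ⊆ U), x e = #U

variable {E : Finset (Finset V)} {x : Finset V → ℝ}

lemma convex_singleCycleForestPolytope (E : Finset (Finset V)) :
    Convex ℝ (singleCycleForestPolytope E) := by
  rintro x ⟨hx₁, hx₂, hx₃⟩ y ⟨hy₁, hy₂, hy₃⟩ a b ha hb hab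
  simp only [singleCycleForestPolytope, Set.mem_ofPred_eq, Pi.add_apply, Pi.smul_apply,
    smul_eq_mul, sum_add_distrib, ← mul_sum]
  refine ⟨fun e he => ⟨?_, ?_⟩, fun e he => by simp [hx₂ e he, hy₂ e he], fun U => ?_⟩
  · exact add_nonneg (mul_nonneg ha (hx₁ e he).1) (mul_nonneg hb (hy₁ e he).1)
  · nlinarith [hx₁ e he, hy₁ e he]
  · nlinarith [hx₃ U, hy₃ U]

lemma isCompact_singleCycleForestPolytope (E : Finset (Finset V)) :
    IsCompact (singleCycleForestPolytope E) := by
  have hclosed : IsClosed (singleCycleForestPolytope E) := by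
    simp only [singleCycleForestPolytope, Set.ofPred_and, Set.ofPred_forall]
    refine .inter (isClosed_iInter fun e => isClosed_iInter fun _ =>
      (isClosed_le continuous_const (continuous_apply e)).inter
        (isClosed_le (continuous_apply e) continuous_const)) (.inter
      (isClosed_iInter fun e => isClosed_iInter fun _ => isClosed_eq (continuous_apply e)
        continuous_const)
      (isClosed_iInter fun U => isClosed_le (continuous_finsetSum _ fun e _ => continuous_apply e)
        continuous_const))
  refine (isCompact_univ_pi fun _ => isCompact_Icc (a := (0 : ℝ)) (b := 1)).of_isClosed_subset
    hclosed fun x ⟨hx₁, hx₂, _⟩ e _ => ?_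
  by_cases he : e ∈ E
  · exact hx₁ e he
  · simp [hx₂ e he]

lemma indicator_mem_singleCycleForestPolytope_iff {F' : Finset (Finset V)} (hF : F' ⊆ E) :
    (fun e => if e ∈ F' then (1 : ℝ) else 0) ∈ singleCycleForestPolytope E ↔
      ∀ U : Finset V, #(F'.filter (· ⊆ U)) ≤ #U := by
  have hsum (U : Finset V) :
      ∑ e ∈ E.filter (· ⊆ U), (if e ∈ F' then (1 : ℝ) else 0) =
        #(F'.filter (· ⊆ U)) := by
    rw [sum_boole, filter_filter]
    congr 2
    ext e
    simp only [mem_filter]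
    exact ⟨fun h => ⟨h.2.2, h.2.1⟩, fun h => ⟨hF h.1, h.2, h.1⟩⟩
  simp only [singleCycleForestPolytope, Set.mem_ofPred_eq, hsum, Nat.cast_le]
  exact ⟨fun h => h.2.2, fun h => ⟨fun e _ => by split_ifs <;> norm_num,
    fun e he => if_neg fun h => he (hF h), h⟩⟩

lemma eq_indicator_of_forall_eq_zero_or_one (hx₀ : ∀ e ∉ E, x e = 0)
    (hx : ∀ e ∈ E, x e = 0 ∨ x e = 1) :
    x = fun e => if e ∈ E.filter (x · = 1) then 1 else 0 := by
  funext e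
  by_cases he : e ∈ E
  · rcases hx e he with h | h <;> simp [he, h]
  · simp [he, hx₀ e he]

lemma IsTight.inter (hx : x ∈ singleCycleForestPolytope E) {U W : Finset V}
    (hU : IsTight E x U) (hW : IsTight E x W) : IsTight E x (U ∩ W) := by
  have hinter : E.filter (· ⊆ U) ∩ E.filter (· ⊆ W) = E.filter (· ⊆ U ∩ W) := by
    rw [← filter_and]; simp only [subset_inter_iff]
  have hunion : ∑ e ∈ E.filter (· ⊆ U) ∪ E.filter (· ⊆ W), x e ≤
      ∑ e ∈ E.filter (· ⊆ U ∪ W), x e := by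
    refine sum_le_sum_of_subset_of_nonneg (fun e he => ?_) fun e he _ =>
      (hx.1 e (mem_filter.1 he).1).1
    rcases mem_union.1 he with he | he <;> obtain ⟨heE, heS⟩ := mem_filter.1 he
    exacts [mem_filter.2 ⟨heE, heS.trans subset_union_left⟩,
      mem_filter.2 ⟨heE, heS.trans subset_union_right⟩]
  have hsum := sum_union_inter (s₁ := E.filter (· ⊆ U)) (s₂ := E.filter (· ⊆ W)) (f := x)
  have hcard : ((U ∪ W).card : ℝ) + (U ∩ W).card = U.card + W.card := by
    exact_mod_cast card_union_add_card_inter U W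
  rw [hinter] at hsum
  unfold IsTight at hU hW ⊢
  linarith [hx.2.2 (U ∪ W), hx.2.2 (U ∩ W)]

lemma exists_ne_mem_Ioo_of_isTight (hx : x ∈ singleCycleForestPolytope E) {U : Finset V}
    (hU : IsTight E x U) {e₀ : Finset V} (he₀ : e₀ ∈ E.filter (· ⊆ U))
    (hx₀ : x e₀ ∈ Set.Ioo 0 1) :
    ∃ e₁ ∈ E.filter (· ⊆ U), e₁ ≠ e₀ ∧ x e₁ ∈ Set.Ioo 0 1 := by
  by_contra! h
  have hint : x e₀ ∈ (Int.castRingHom ℝ).range := by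
    have hsplit := add_sum_erase _ x he₀
    rw [IsTight] at hU
    rw [show x e₀ = #U - ∑ e ∈ (E.filter (· ⊆ U)).erase e₀, x e by linarith]
    refine sub_mem (natCast_mem _ _) (sum_mem fun e he => ?_)
    obtain ⟨hne, he⟩ := mem_erase.1 he
    obtain ⟨h₀, h₁⟩ := hx.1 e (mem_filter.1 he).1
    rcases h₀.eq_or_lt with h₀ | h₀
    · exact h₀ ▸ zero_mem _
    · rw [(h₁.eq_or_lt.resolve_right fun h₁ => h e he hne ⟨h₀, h₁⟩)]
      exact one_mem _
  obtain ⟨n, hn⟩ := hint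
  rw [← hn, eq_intCast] at hx₀
  obtain ⟨h₀, h₁⟩ := hx₀
  norm_cast at h₀ h₁
  omega

variable [Fintype V]

lemma exists_direction_preserving_tight_sets (hx : x ∈ singleCycleForestPolytope E)
    (hfrac : ∃ e ∈ E, x e ∈ Set.Ioo 0 1) :
    ∃ d : Finset V → ℝ, d ≠ 0 ∧ (∀ e, d e ≠ 0 → e ∈ E ∧ x e ∈ Set.Ioo 0 1) ∧
      ∀ U, IsTight E x U → ∑ e ∈ E.filter (· ⊆ U), d e = 0 := by
  set 𝒯 := univ.filter fun U =>
    IsTight E x U ∧ ∃ e ∈ E.filter (· ⊆ U), x e ∈ Set.Ioo 0 1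
  rcases 𝒯.eq_empty_or_nonempty with h𝒯 | h𝒯
  · obtain ⟨e₀, he₀, hx₀⟩ := hfrac
    refine ⟨Pi.single e₀ 1, fun h => by simpa using congr_fun h e₀, fun e he => ?_,
      fun U hU => ?_⟩
    · obtain rfl : e = e₀ := by by_contra hne; exact he (Pi.single_eq_of_ne hne _)
      exact ⟨he₀, hx₀⟩
    · rw [sum_pi_single', if_neg fun he₀U => ?_]
      exact eq_empty_iff_forall_notMem.1 h𝒯 U (mem_filter.2 ⟨mem_univ _, hU, e₀, he₀U, hx₀⟩)
  · obtain ⟨T, hT, hmin⟩ := exists_min_image 𝒯 card h𝒯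
    obtain ⟨hTt, e₀, he₀, hx₀⟩ := (mem_filter.1 hT).2
    obtain ⟨e₁, he₁, hne, hx₁⟩ := exists_ne_mem_Ioo_of_isTight hx hTt he₀ hx₀
    have hsub : ∀ e ∈ E.filter (· ⊆ T), x e ∈ Set.Ioo 0 1 →
        ∀ U, IsTight E x U → e ⊆ U → T ⊆ U := by
      intro e he hxe U hU heU
      have hTU : T ∩ U ∈ 𝒯 := mem_filter.2 ⟨mem_univ _, hTt.inter hx hU, e,
        mem_filter.2 ⟨(mem_filter.1 he).1, subset_inter (mem_filter.1 he).2 heU⟩, hxe⟩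
      rw [← eq_of_subset_of_card_le inter_subset_left (hmin _ hTU)]
      exact inter_subset_right
    have hiff (U : Finset V) (hU : IsTight E x U) :
        e₀ ∈ E.filter (· ⊆ U) ↔ e₁ ∈ E.filter (· ⊆ U) := by
      simp only [mem_filter, (mem_filter.1 he₀).1, (mem_filter.1 he₁).1, true_and]
      exact ⟨fun h => ((mem_filter.1 he₁).2).trans (hsub e₀ he₀ hx₀ U hU h),
        fun h => ((mem_filter.1 he₀).2).trans (hsub e₁ he₁ hx₁ U hU h)⟩
    refine ⟨Pi.single e₀ 1 - Pi.single e₁ 1,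
      fun h => by simpa [hne.symm] using congr_fun h e₀, fun e he => ?_, fun U hU => ?_⟩
    · by_cases h₀ : e = e₀
      · exact h₀ ▸ ⟨(mem_filter.1 he₀).1, hx₀⟩
      by_cases h₁ : e = e₁
      · exact h₁ ▸ ⟨(mem_filter.1 he₁).1, hx₁⟩
      simp [h₀, h₁] at he
    · simp only [Pi.sub_apply, sum_sub_distrib, sum_pi_single', hiff U hU, sub_self]

lemma eventually_add_smul_mem_singleCycleForestPolytope (hx : x ∈ singleCycleForestPolytope E)
    {d : Finset V → ℝ} (hd : ∀ e, d e ≠ 0 → e ∈ E ∧ x e ∈ Set.Ioo 0 1)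
    (hdU : ∀ U, IsTight E x U → ∑ e ∈ E.filter (· ⊆ U), d e = 0) :
    ∀ᶠ t in 𝓝 (0 : ℝ), x + t • d ∈ singleCycleForestPolytope E := by
  obtain ⟨hbox, hout, hU⟩ := hx
  have hedge (e : Finset V) :
      ∀ᶠ t in 𝓝 (0 : ℝ), e ∈ E → 0 ≤ x e + t * d e ∧ x e + t * d e ≤ 1 := by
    by_cases hde : d e = 0
    · exact .of_forall fun t he => by simpa [hde] using hbox e he
    have hmem : Set.Ioo 0 1 ∈ 𝓝 (x e + 0 * d e) := by
      simpa using Ioo_mem_nhds (hd e hde).2.1 (hd e hde).2.2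
    have hcont : Continuous fun t : ℝ => x e + t * d e := by fun_prop
    filter_upwards [hcont.continuousAt.preimage_mem_nhds hmem] with t ht _
    exact ⟨ht.1.le, ht.2.le⟩
  have hset (U : Finset V) :
      ∀ᶠ t in 𝓝 (0 : ℝ), ∑ e ∈ E.filter (· ⊆ U), (x e + t * d e) ≤ #U := by
    simp only [sum_add_distrib, ← mul_sum]
    by_cases hUt : IsTight E x U
    · exact .of_forall fun t => by simp [hdU U hUt, hU U]
    refine (ContinuousAt.eventually_lt (by fun_prop) continuousAt_const ?_).mono fun t => le_of_lt
    simpa using lt_of_le_of_ne (hU U) hUt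
  filter_upwards [eventually_all.2 hedge, eventually_all.2 hset] with t ht₁ ht₂
  refine ⟨fun e he => ht₁ e he, fun e he => ?_, ht₂⟩
  have : d e = 0 := by by_contra h; exact he (hd e h).1
  simp [hout e he, this]

lemma eq_zero_or_eq_one_of_mem_extremePoints
    (hx : x ∈ (singleCycleForestPolytope E).extremePoints ℝ) :
    ∀ e ∈ E, x e = 0 ∨ x e = 1 := by
  by_contra! h
  obtain ⟨e, he, hx₀, hx₁⟩ := h
  obtain ⟨d, hd₀, hd, hdU⟩ := exists_direction_preserving_tight_sets hx.1 ⟨e, he,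
    (hx.1.1 e he).1.lt_of_ne' hx₀, (hx.1.1 e he).2.lt_of_ne hx₁⟩
  have hpos := eventually_add_smul_mem_singleCycleForestPolytope hx.1 hd hdU
  have hneg := eventually_add_smul_mem_singleCycleForestPolytope hx.1 (d := -d)
    (by simpa using hd) (by simpa using hdU)
  obtain ⟨t, ⟨hp, hm⟩, ht⟩ := (((hpos.and hneg).filter_mono nhdsWithin_le_nhds).and
    (self_mem_nhdsWithin (s := Set.Ioi 0))).exists
  have hseg : x ∈ openSegment ℝ (x + t • d) (x + t • -d) :=
    ⟨1 / 2, 1 / 2, by norm_num, by norm_num, by norm_num, by ext; simp; ring⟩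
  have := hx.2 hp hm hseg
  exact hd₀ ((smul_eq_zero.1 (add_eq_left.1 this)).resolve_left (ne_of_gt ht))

end Polytope

/-- The polytope `{x ∈ [0,1]^E : Σ_{e ∈ E(U)} x_e ≤ |U| for all U ⊆ V}` equals the convex
hull of the indicator vectors of single-cycle forests of `G`. -/
theorem stmt9 {V : Type*} [Fintype V] [DecidableEq V] (E : Finset (Finset V))
    (hE : ∀ e ∈ E, e.card = 2) :
    {x : Finset V → ℝ |
        (∀ e ∈ E, 0 ≤ x e ∧ x e ≤ 1) ∧ (∀ e ∉ E, x e = 0) ∧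
        ∀ U : Finset V, ∑ e ∈ E.filter (fun e => e ⊆ U), x e ≤ (U.card : ℝ)} =
      convexHull ℝ
        {x : Finset V → ℝ | ∃ F' : Finset (Finset V), F' ⊆ E ∧
          IsSingleCycleForest (pairGraph F') ∧
          x = fun e => if e ∈ F' then (1 : ℝ) else 0} := by
  change singleCycleForestPolytope E = _
  set P := singleCycleForestPolytope E
  set S := {x : Finset V → ℝ | ∃ F' : Finset (Finset V), F' ⊆ E ∧
    IsSingleCycleForest (pairGraph F') ∧ x = fun e => if e ∈ F' then (1 : ℝ) else 0}
  have hmem {F' : Finset (Finset V)} (hF : F' ⊆ E) :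
      (fun e => if e ∈ F' then (1 : ℝ) else 0) ∈ P ↔
        IsSingleCycleForest (pairGraph F') := by
    rw [indicator_mem_singleCycleForestPolytope_iff hF,
      isSingleCycleForest_pairGraph_iff fun e he => hE e (hF he)]
  have hext : P.extremePoints ℝ ⊆ S := fun x hx => by
    have hx_eq := eq_indicator_of_forall_eq_zero_or_one hx.1.2.1
      (eq_zero_or_eq_one_of_mem_extremePoints hx)
    exact ⟨_, filter_subset _ _, (hmem (filter_subset _ _)).1 (hx_eq ▸ hx.1), hx_eq⟩
  have hS : S.Finite := (Set.finite_range fun F' : Finset (Finset V) =>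
    fun e => if e ∈ F' then (1 : ℝ) else 0).subset fun x ⟨F', _, _, hx⟩ => ⟨F', hx.symm⟩
  refine (Set.Subset.antisymm ?_ (convexHull_min ?_ (convex_singleCycleForestPolytope E)))
  · calc P = closure (convexHull ℝ (P.extremePoints ℝ)) :=
          (closure_convexHull_extremePoints (isCompact_singleCycleForestPolytope E)
            (convex_singleCycleForestPolytope E)).symm
      _ ⊆ closure (convexHull ℝ S) := closure_mono (convexHull_mono hext)
      _ = convexHull ℝ S := (hS.isCompact_convexHull ℝ).isClosed.closure_eq
  · rintro _ ⟨F', hF, hSCF, rfl⟩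
    exact (hmem hF).2 hSCF
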